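/- arXiv:2108.08603 — 3 statements merged into one kernel-verified Lean document; each statement's English description precedes it below -/
import Mathlib

section
/- DFP-3: F(Γ,P) is deductively closed with respect to the reduced signature, i.e., F(Γ,P) = Cn_{Σ\P}(F(Γ,P)). -/
/-- Propositional formulas over atoms `ℕ`. -/
inductive Fm where
  | var : ℕ → Fm
  | top : Fm
  | bot : Fm
  | neg : Fm → Fm
  | conj : Fm → Fm → Fm
  | disj : Fm → Fm → Fm

/-- Evaluation of a formula under a total valuation. -/
def Fm.eval (v : ℕ → Bool) : Fm → Bool
  | var n => v n
  | top => true
  | bot => false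
  | neg φ => !(φ.eval v)
  | conj φ ψ => φ.eval v && ψ.eval v
  | disj φ ψ => φ.eval v || ψ.eval v

/-- The atoms mentioned in a formula. -/
def Fm.atoms : Fm → Set ℕ
  | var n => {n}
  | top => ∅
  | bot => ∅
  | neg φ => φ.atoms
  | conj φ ψ => φ.atoms ∪ ψ.atoms
  | disj φ ψ => φ.atoms ∪ ψ.atoms

/-- The language `L_S` over signature `S`: formulas mentioning only atoms in `S`. -/
def Lang (S : Set ℕ) : Set Fm := {φ | φ.atoms ⊆ S}

/-- Interpretations `Ω_S` over signature `S`. -/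
def Itp (S : Set ℕ) := ↥S → Bool

open Classical in
/-- Extend an interpretation over `S` to a total valuation (false outside `S`). -/
noncomputable def Itp.toVal {S : Set ℕ} (ω : Itp S) : ℕ → Bool :=
  fun n => if h : n ∈ S then ω ⟨n, h⟩ else false

/-- Satisfaction of a formula by an interpretation over `S`. -/
def Itp.sat {S : Set ℕ} (ω : Itp S) (φ : Fm) : Prop := φ.eval ω.toVal = true

/-- Restriction of an interpretation over `S` to a subsignature `S'`. -/
def Itp.restrict {S' S : Set ℕ} (h : S' ⊆ S) (ω : Itp S) : Itp S' :=
  fun n => ω ⟨n.1, h n.2⟩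

/-- Models over `S` of a set of formulas. -/
def Models (S : Set ℕ) (Γ : Set Fm) : Set (Itp S) := {ω | ∀ φ ∈ Γ, ω.sat φ}

/-- Semantic entailment over `S` between sets of formulas. -/
def Entails (S : Set ℕ) (Γ Δ : Set Fm) : Prop := Models S Γ ⊆ Models S Δ

/-- Consequence operator `Cn_S`. -/
def Cn (S : Set ℕ) (Γ : Set Fm) : Set Fm :=
  {φ | φ ∈ Lang S ∧ ∀ ω ∈ Models S Γ, ω.sat φ}

/-- Delgrande forgetting `F(Γ,P) = Cn_S(Γ) ∩ L_{S\P}`. -/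
def Forget (S : Set ℕ) (Γ : Set Fm) (P : Set ℕ) : Set Fm :=
  Cn S Γ ∩ Lang (S \ P)

/-- Reduction of a set of models to a subsignature. -/
def reduce {S' S : Set ℕ} (h : S' ⊆ S) (M : Set (Itp S)) : Set (Itp S') :=
  {ω' | ∃ ω ∈ M, ω.restrict h = ω'}

/-- Expansion of a set of models to a supersignature. -/
def expand {S' S : Set ℕ} (h : S' ⊆ S) (M' : Set (Itp S')) : Set (Itp S) :=
  {ω | ω.restrict h ∈ M'}

/-- An OCF over `S` is a ranking function attaining rank 0. -/
def IsOCF {S : Set ℕ} (κ : Itp S → ℕ) : Prop := ∃ ω, κ ω = 0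

/-- The models (rank-0 interpretations) of an OCF. -/
def OCFMod {S : Set ℕ} (κ : Itp S → ℕ) : Set (Itp S) := {ω | κ ω = 0}

/-- The belief set of an OCF over `S`. -/
def Bel (S : Set ℕ) (κ : Itp S → ℕ) : Set Fm :=
  {φ | φ ∈ Lang S ∧ ∀ ω ∈ OCFMod κ, ω.sat φ}

/-- Marginalisation of an OCF to a subsignature. -/
noncomputable def marg {S' S : Set ℕ} (h : S' ⊆ S) (κ : Itp S → ℕ) : Itp S' → ℕ :=
  fun ω' => sInf {n | ∃ ω : Itp S, ω.restrict h = ω' ∧ κ ω = n}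

/-- Lifting of an OCF over `S'` to a supersignature `S`. -/
def lift {S' S : Set ℕ} (h : S' ⊆ S) (κ' : Itp S' → ℕ) : Itp S → ℕ :=
  fun ω => κ' (ω.restrict h)

/-- Substitution of the atom `ρ` by formula `χ`. -/
def Fm.subst (ρ : ℕ) (χ : Fm) : Fm → Fm
  | var n => if n = ρ then χ else var n
  | top => top
  | bot => bot
  | neg φ => neg (subst ρ χ φ)
  | conj φ ψ => conj (subst ρ χ φ) (subst ρ χ ψ)
  | disj φ ψ => disj (subst ρ χ φ) (subst ρ χ ψ)

/-- Boole's atom forgetting: `forget(φ,ρ) = φ[ρ/⊤] ∨ φ[ρ/⊥]`. -/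
def boole (φ : Fm) (ρ : ℕ) : Fm := .disj (φ.subst ρ .top) (φ.subst ρ .bot)

lemma eval_congr (φ : Fm) (v w : ℕ → Bool) (h : ∀ n ∈ φ.atoms, v n = w n) :
    φ.eval v = φ.eval w := by
  induction φ with
  | var n => exact h n rfl
  | top => rfl
  | bot => rfl
  | neg φ ih => simp [Fm.eval, ih h]
  | conj φ ψ ih1 ih2 =>
      simp only [Fm.eval]
      rw [ih1 (fun n hn => h n (Or.inl hn)), ih2 (fun n hn => h n (Or.inr hn))]
  | disj φ ψ ih1 ih2 =>
      simp only [Fm.eval]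
      rw [ih1 (fun n hn => h n (Or.inl hn)), ih2 (fun n hn => h n (Or.inr hn))]

lemma restrict_sat {S' S : Set ℕ} (h : S' ⊆ S) (ω : Itp S) (φ : Fm)
    (hφ : φ.atoms ⊆ S') : (ω.restrict h).sat φ ↔ ω.sat φ := by
  unfold Itp.sat
  rw [eval_congr φ (ω.restrict h).toVal ω.toVal]
  intro n hn
  have hn' : n ∈ S' := hφ hn
  simp [Itp.toVal, Itp.restrict, hn', h hn']

theorem stmt5 (S P : Set ℕ) (hS : S.Finite) (hP : P ⊆ S)
    (Γ : Set Fm) (hΓ : Γ ⊆ Lang S) :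
    Forget S Γ P = Cn (S \ P) (Forget S Γ P) := by
  ext ψ
  constructor
  · rintro ⟨h1, h2⟩
    exact ⟨h2, fun ω hω => hω ψ ⟨h1, h2⟩⟩
  · rintro ⟨hL, hent⟩
    refine ⟨⟨fun n hn => (hL hn).1, fun ω hω => ?_⟩, hL⟩
    have hsub : S \ P ⊆ S := Set.diff_subset
    have : ω.restrict hsub ∈ Models (S \ P) (Forget S Γ P) := by
      intro φ hφ
      rw [restrict_sat hsub ω φ hφ.2]
      exact hφ.1.2 ω hω
    have h2 := hent _ this
    rw [restrict_sat hsub ω ψ hL] at h2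
    exact h2
end

section
/- DFP-4: If P' ⊆ P then F(Γ,P) = F(F(Γ,P'),P), i.e., first forgetting a subsignature P' of P and then forgetting P equals forgetting P directly. -/
lemma eval_agree {v w : ℕ → Bool} : ∀ φ : Fm, (∀ n ∈ φ.atoms, v n = w n) →
    φ.eval v = φ.eval w
  | .var n, h => h n rfl
  | .top, _ => rfl
  | .bot, _ => rfl
  | .neg φ, h => by simp [Fm.eval, eval_agree φ h]
  | .conj φ ψ, h => by
      simp only [Fm.eval]
      rw [eval_agree φ (fun n hn => h n (Or.inl hn)),
        eval_agree ψ (fun n hn => h n (Or.inr hn))]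
  | .disj φ ψ, h => by
      simp only [Fm.eval]
      rw [eval_agree φ (fun n hn => h n (Or.inl hn)),
        eval_agree ψ (fun n hn => h n (Or.inr hn))]

lemma toVal_restrict_agree {S' S : Set ℕ} (h : S' ⊆ S) (ω : Itp S) {n : ℕ} (hn : n ∈ S') :
    (ω.restrict h).toVal n = ω.toVal n := by
  simp [Itp.toVal, hn, h hn, Itp.restrict]

lemma sat_restrict {S' S : Set ℕ} (h : S' ⊆ S) (ω : Itp S) {φ : Fm} (hφ : φ.atoms ⊆ S') :
    (ω.restrict h).sat φ ↔ ω.sat φ := by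
  unfold Itp.sat
  rw [eval_agree φ (fun n hn => toVal_restrict_agree h ω (hφ hn))]

def lit (v : ℕ → Bool) (n : ℕ) : Fm := if v n then .var n else .neg (.var n)

lemma lit_atoms (v : ℕ → Bool) (n : ℕ) : (lit v n).atoms = {n} := by
  unfold lit; split <;> rfl

lemma lit_eval (v w : ℕ → Bool) (n : ℕ) : (lit v n).eval w = true ↔ w n = v n := by
  unfold lit
  cases hv : v n <;> simp [Fm.eval, hv]

noncomputable def charFm (T : Finset ℕ) (v : ℕ → Bool) : Fm :=
  T.toList.foldr (fun n acc => .conj (lit v n) acc) .top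

lemma foldr_atoms (v : ℕ → Bool) (l : List ℕ) :
    (l.foldr (fun n acc => Fm.conj (lit v n) acc) .top).atoms ⊆ {n | n ∈ l} := by
  induction l with
  | nil => simp [Fm.atoms]
  | cons a l ih =>
      intro n hn
      simp only [List.mem_cons, Set.mem_setOf_eq]
      rcases hn with hn | hn
      · rw [lit_atoms] at hn; exact Or.inl hn
      · exact Or.inr (ih hn)

lemma foldr_eval (v w : ℕ → Bool) (l : List ℕ) :
    (l.foldr (fun n acc => Fm.conj (lit v n) acc) .top).eval w = true ↔
      ∀ n ∈ l, w n = v n := by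
  induction l with
  | nil => simp [Fm.eval]
  | cons a l ih =>
      simp only [List.foldr_cons, Fm.eval, Bool.and_eq_true, ih, lit_eval, List.mem_cons]
      constructor
      · rintro ⟨h1, h2⟩ n (rfl | hn)
        · exact h1
        · exact h2 n hn
      · intro h; exact ⟨h a (Or.inl rfl), fun n hn => h n (Or.inr hn)⟩

lemma charFm_atoms (T : Finset ℕ) (v : ℕ → Bool) : (charFm T v).atoms ⊆ ↑T := by
  intro n hn
  have := foldr_atoms v T.toList hn
  simpa using this

lemma charFm_eval (T : Finset ℕ) (v w : ℕ → Bool) :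
    (charFm T v).eval w = true ↔ ∀ n ∈ T, w n = v n := by
  rw [charFm, foldr_eval]
  simp

theorem stmt6 (S P P' : Set ℕ) (hS : S.Finite) (hP : P ⊆ S) (hP' : P' ⊆ P)
    (Γ : Set Fm) (hΓ : Γ ⊆ Lang S) :
    Forget S Γ P = Forget (S \ P') (Forget S Γ P') P := by
  have hsub : S \ P' ⊆ S := Set.diff_subset
  have hdiff : (S \ P') \ P = S \ P := by
    ext x
    constructor
    · rintro ⟨⟨h1, _⟩, h3⟩; exact ⟨h1, h3⟩
    · rintro ⟨h1, h2⟩; exact ⟨⟨h1, fun h => h2 (hP' h)⟩, h2⟩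
  have hPP' : S \ P ⊆ S \ P' := fun x ⟨h1, h2⟩ => ⟨h1, fun h => h2 (hP' h)⟩
  -- restriction of a model of Γ is a model of Forget S Γ P'
  have hrestr : ∀ ω ∈ Models S Γ, ω.restrict hsub ∈ Models (S \ P') (Forget S Γ P') := by
    intro ω hω ψ hψ
    rcases hψ with ⟨⟨_, hC⟩, hL⟩
    exact (sat_restrict hsub ω hL).mpr (hC ω hω)
  ext φ
  unfold Forget
  rw [hdiff]
  simp only [Set.mem_inter_iff]
  constructor
  · rintro ⟨⟨hφL, hφC⟩, hφLP⟩
    refine ⟨⟨fun n hn => hPP' (hφLP hn), ?_⟩, hφLP⟩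
    intro ω' hω'
    -- ω' must be a restriction of a model of Γ
    by_cases hex : ∃ ω ∈ Models S Γ, ω.restrict hsub = ω'
    · rcases hex with ⟨ω, hω, rfl⟩
      exact (sat_restrict hsub ω (fun n hn => hPP' (hφLP hn))).mpr (hφC ω hω)
    · exfalso
      have hfin : (S \ P').Finite := hS.subset hsub
      set T : Finset ℕ := hfin.toFinset with hT
      set χ : Fm := charFm T ω'.toVal with hχ
      have hχatoms : χ.atoms ⊆ S \ P' := by
        intro n hn
        have := charFm_atoms T ω'.toVal hn
        simpa [hT] using this
      have hψ : Fm.neg χ ∈ Forget S Γ P' := by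
        refine ⟨⟨fun n hn => hsub (hχatoms hn), ?_⟩, hχatoms⟩
        intro ω hω
        unfold Itp.sat Fm.eval
        simp only [Bool.not_eq_true']
        by_contra hc
        rw [Bool.not_eq_false] at hc
        have hall : ∀ n ∈ T, ω.toVal n = ω'.toVal n := (charFm_eval T _ _).mp hc
        apply hex
        refine ⟨ω, hω, ?_⟩
        funext ⟨n, hn⟩
        have hnT : n ∈ T := by simp [hT, hn]
        have := hall n hnT
        simpa [Itp.restrict, Itp.toVal, hn, hsub hn] using this
      have hsatψ := hω' _ hψ
      have hsatχ : ω'.sat χ := by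
        unfold Itp.sat
        rw [hχ, charFm_eval]
        intro n _; rfl
      unfold Itp.sat Fm.eval at hsatψ
      rw [hsatχ] at hsatψ
      simp at hsatψ
  · rintro ⟨⟨_, hφC⟩, hφLP⟩
    refine ⟨⟨fun n hn => hsub (hPP' (hφLP hn)), ?_⟩, hφLP⟩
    intro ω hω
    have := hφC (ω.restrict hsub) (hrestr ω hω)
    exact (sat_restrict hsub ω (fun n hn => hPP' (hφLP hn))).mp this
end

section
/- Marginalisation satisfies the generalized postulate DFP-ES-3: for an OCF κ over Σ and signatures P' ⊆ P, the beliefs of marginalising first to Σ\P' and then to (Σ\P')\P equal the beliefs of marginalising directly to Σ\P. -/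
/-
Marginalisation is transitive: every fibre of a restriction is nonempty and ranks are natural
numbers, so each minimum is attained, and a minimum over the fibres of a composite restriction can
be taken fibre by fibre. Hence marginalising to `S \ P'` and then to `(S \ P') \ P` is
marginalising to `(S \ P') \ P` directly, and since `P' ⊆ P` this signature is `S \ P`.
-/

open Classical in
theorem Itp.exists_restrict_eq {S' S : Set ℕ} (h : S' ⊆ S) (ω' : Itp S') :
    ∃ ω : Itp S, ω.restrict h = ω' :=
  ⟨fun n => if hn : n.1 ∈ S' then ω' ⟨n.1, hn⟩ else false, funext fun n => by
    simp [Itp.restrict, n.2]⟩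

theorem Itp.restrict_restrict {S'' S' S : Set ℕ} (h : S' ⊆ S) (h' : S'' ⊆ S') (ω : Itp S) :
    (ω.restrict h).restrict h' = ω.restrict (h'.trans h) := rfl

section Marg

variable {S' S : Set ℕ} (h : S' ⊆ S) (κ : Itp S → ℕ)

theorem marg_le_of_restrict_eq {ω : Itp S} {ω' : Itp S'} (hω : ω.restrict h = ω') :
    marg h κ ω' ≤ κ ω :=
  Nat.sInf_le ⟨ω, hω, rfl⟩

theorem exists_restrict_eq_and_eq_marg (ω' : Itp S') :
    ∃ ω : Itp S, ω.restrict h = ω' ∧ κ ω = marg h κ ω' := by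
  obtain ⟨ω, hω⟩ := Itp.exists_restrict_eq h ω'
  exact Nat.sInf_mem (s := {n | ∃ ω : Itp S, ω.restrict h = ω' ∧ κ ω = n}) ⟨κ ω, ω, hω, rfl⟩

end Marg

theorem marg_marg {S'' S' S : Set ℕ} (h : S' ⊆ S) (h' : S'' ⊆ S') (κ : Itp S → ℕ) :
    marg h' (marg h κ) = marg (h'.trans h) κ := by
  funext ω''
  apply le_antisymm
  · obtain ⟨ω, hω, hκω⟩ := exists_restrict_eq_and_eq_marg (h'.trans h) κ ω''
    calc marg h' (marg h κ) ω''
        ≤ marg h κ (ω.restrict h) := marg_le_of_restrict_eq h' _ hω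
      _ ≤ κ ω := marg_le_of_restrict_eq h κ rfl
      _ = marg (h'.trans h) κ ω'' := hκω
  · obtain ⟨ω', hω', hκω'⟩ := exists_restrict_eq_and_eq_marg h' (marg h κ) ω''
    obtain ⟨ω, hω, hκω⟩ := exists_restrict_eq_and_eq_marg h κ ω'
    calc marg (h'.trans h) κ ω''
        ≤ κ ω := marg_le_of_restrict_eq _ κ (by rw [← Itp.restrict_restrict h h', hω, hω'])
      _ = marg h' (marg h κ) ω'' := by rw [hκω, hκω']

theorem bel_marg_congr {S₁ S₂ S : Set ℕ} (hS : S₁ = S₂) (h₁ : S₁ ⊆ S) (h₂ : S₂ ⊆ S)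
    (κ : Itp S → ℕ) : Bel S₁ (marg h₁ κ) = Bel S₂ (marg h₂ κ) := by
  subst hS
  rfl

theorem stmt17_general (S P P' : Set ℕ) (hP' : P' ⊆ P)
    (κ : Itp S → ℕ) :
    Bel ((S \ P') \ P)
        (marg (Set.diff_subset : (S \ P') \ P ⊆ S \ P')
          (marg (Set.diff_subset : S \ P' ⊆ S) κ))
      = Bel (S \ P) (marg (Set.diff_subset : S \ P ⊆ S) κ) := by
  rw [marg_marg]
  exact bel_marg_congr (by rw [Set.sdiff_sdiff, Set.union_eq_self_of_subset_left hP']) _ _ κ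

theorem stmt17 (S P P' : Set ℕ) (hS : S.Finite) (hP : P ⊆ S) (hP' : P' ⊆ P)
    (κ : Itp S → ℕ) (hκ : IsOCF κ) :
    Bel ((S \ P') \ P)
        (marg (Set.diff_subset : (S \ P') \ P ⊆ S \ P')
          (marg (Set.diff_subset : S \ P' ⊆ S) κ))
      = Bel (S \ P) (marg (Set.diff_subset : S \ P ⊆ S) κ) :=
  stmt17_general S P P' hP' κ
end
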